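/- arXiv:1010.1133 — 2 statements merged into one kernel-verified Lean document; each statement's English description precedes it below -/
import Mathlib

section
/- Let h = g ∘ ρ^{-1} : [0,1] → R, where g(φ) = (2φ - sin 2φ)/(2φ²) (g(0)=0) and ρ(φ) = sin(φ)/φ (ρ(0)=1) on [0,π]. Then for all r ∈ [0,1), h'(r) = -2 cos(φ)/φ where φ = ρ^{-1}(r) ∈ (0,π]. Consequently h is increasing on [0, 2/π] from 1/π to 2/π and decreasing on [2/π, 1] from 2/π to 0. -/
open scoped Real

noncomputable section

/-- The function `g(φ) = (2φ - sin 2φ)/(2φ²)`, `g(0) = 0`. -/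
def gProf (φ : ℝ) : ℝ := if φ = 0 then 0 else (2 * φ - Real.sin (2 * φ)) / (2 * φ ^ 2)

/-- The function `ρ(φ) = sin φ / φ`, `ρ(0) = 1`. -/
def rhoProf (φ : ℝ) : ℝ := if φ = 0 then 1 else Real.sin φ / φ

/-- The inverse `ρ⁻¹ : [0,1] → [0,π]` of `ρ` on `[0,π]`. -/
def rhoInv : ℝ → ℝ := Function.invFunOn rhoProf (Set.Icc 0 π)

/-- The profile function `h = g ∘ ρ⁻¹` of the unit Carnot–Carathéodory ball:
`B̄(0,1) = {[z,t] : ‖z‖ ≤ 1, |t| ≤ h(‖z‖)}`. -/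
def hProf : ℝ → ℝ := fun r => gProf (rhoInv r)

/-! With `φ = ρ⁻¹ r`, the derivatives of `ρ` and `g` share the factor `u φ = sin φ - φ cos φ`,
which is positive on `(0, π]` because `u' φ = φ sin φ`: `ρ' = -u/φ²` and `g' = 2 cos φ · u/φ³`.
So `ρ` is a decreasing bijection `[0, π] → [0, 1]` with continuous inverse (by compactness), and the
inverse function rule gives `h' = g'/ρ' = -2 cos φ / φ`. Its sign is that of `-cos φ`, which changes
at `φ = π/2`, i.e. at `r = ρ (π/2) = 2/π`; the images then follow from continuity and the values
`h 0 = g π = 1/π`, `h (2/π) = g (π/2) = 2/π`, `h 1 = g 0 = 0`. -/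

open Real Set Filter Topology

theorem Set.InjOn.continuousOn_invFunOn {α β : Type*} [TopologicalSpace α] [TopologicalSpace β]
    [T2Space β] [Nonempty α] {f : α → β} {s : Set α} (hinj : InjOn f s) (hs : IsCompact s)
    (hf : ContinuousOn f s) : ContinuousOn (Function.invFunOn f s) (f '' s) := by
  rw [continuousOn_iff_isClosed]
  intro C hC
  refine ⟨f '' (s ∩ C), ((hs.inter_right hC).image_of_continuousOn
    (hf.mono inter_subset_left)).isClosed, ?_⟩
  ext y
  simp only [mem_inter_iff, mem_preimage]
  constructor
  · rintro ⟨hy, x, hx, rfl⟩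
    exact ⟨⟨x, ⟨hx, hinj.leftInvOn_invFunOn hx ▸ hy⟩, rfl⟩, x, hx, rfl⟩
  · rintro ⟨⟨x, ⟨hx, hxC⟩, rfl⟩, -⟩
    exact ⟨(hinj.leftInvOn_invFunOn hx).symm ▸ hxC, x, hx, rfl⟩

theorem HasDerivWithinAt.of_local_left_inverse {𝕜 : Type*} [NontriviallyNormedField 𝕜]
    {f g : 𝕜 → 𝕜} {f' a : 𝕜} {s t : Set 𝕜} (hg : Tendsto g (𝓝[s] a) (𝓝[t] (g a)))
    (hf : HasDerivWithinAt f f' t (g a)) (hf' : f' ≠ 0) (ha : a ∈ s)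
    (hfg : ∀ᶠ y in 𝓝[s] a, f (g y) = y) : HasDerivWithinAt g f'⁻¹ s a :=
  HasFDerivWithinAt.of_local_left_inverse
    (f' := ContinuousLinearEquiv.unitsEquivAut 𝕜 (Units.mk0 f' hf')) hg hf ha hfg

theorem sin_sub_mul_cos_pos {φ : ℝ} (h0 : 0 < φ) (hπ : φ ≤ π) : 0 < sin φ - φ * cos φ := by
  have hderiv (x : ℝ) : HasDerivAt (fun x => sin x - x * cos x) (x * sin x) x :=
    ((hasDerivAt_sin x).sub ((hasDerivAt_id' x).mul (hasDerivAt_cos x))).congr_deriv (by ring)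
  have hmono : StrictMonoOn (fun x => sin x - x * cos x) (Icc 0 π) := by
    refine strictMonoOn_of_deriv_pos (convex_Icc 0 π)
      (fun x _ => (hderiv x).continuousAt.continuousWithinAt) fun x hx => ?_
    rw [interior_Icc] at hx
    rw [(hderiv x).deriv]
    exact mul_pos hx.1 (sin_pos_of_pos_of_lt_pi hx.1 hx.2)
  simpa using hmono (left_mem_Icc.2 pi_pos.le) ⟨h0.le, hπ⟩ h0

theorem hasDerivAt_rhoProf {φ : ℝ} (hφ : φ ≠ 0) :
    HasDerivAt rhoProf (-(sin φ - φ * cos φ) / φ ^ 2) φ := by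
  have heq : rhoProf =ᶠ[𝓝 φ] fun x => sin x / x := by
    filter_upwards [isOpen_ne.mem_nhds hφ] with x hx
    simp [rhoProf, hx]
  exact (((hasDerivAt_sin φ).div (hasDerivAt_id' φ) hφ).congr_of_eventuallyEq heq).congr_deriv
    (by ring)

theorem hasDerivAt_gProf {φ : ℝ} (hφ : φ ≠ 0) :
    HasDerivAt gProf (2 * cos φ * (sin φ - φ * cos φ) / φ ^ 3) φ := by
  have heq : gProf =ᶠ[𝓝 φ] fun x => (2 * x - sin (2 * x)) / (2 * x ^ 2) := by
    filter_upwards [isOpen_ne.mem_nhds hφ] with x hx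
    simp [gProf, hx]
  have hnum : HasDerivAt (fun x => 2 * x - sin (2 * x)) (2 * 1 - cos (2 * φ) * (2 * 1)) φ :=
    ((hasDerivAt_id' φ).const_mul 2).sub ((hasDerivAt_id' φ).const_mul 2).sin
  have hden : HasDerivAt (fun x => 2 * x ^ 2) (2 * (↑2 * φ ^ (2 - 1))) φ :=
    (hasDerivAt_pow 2 φ).const_mul 2
  refine ((hnum.div hden (by positivity)).congr_of_eventuallyEq heq).congr_deriv ?_
  rw [cos_two_mul, sin_two_mul]
  field_simp
  ring

theorem abs_gProf_le (φ : ℝ) : |gProf φ| ≤ |φ| := by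
  rcases eq_or_ne φ 0 with rfl | hφ
  · simp [gProf]
  have h := abs_sub_sin_le (2 * φ)
  have hφ' : 0 < |φ| := abs_pos.2 hφ
  rw [gProf, if_neg hφ, abs_div, div_le_iff₀ (by positivity)]
  rw [abs_mul, abs_two] at h
  have : |2 * φ ^ 2| = 2 * |φ| ^ 2 := by rw [abs_mul, abs_two, abs_pow]
  rw [this]
  nlinarith [pow_pos hφ' 3]

theorem continuous_gProf : Continuous gProf := by
  rw [continuous_iff_continuousAt]
  intro φ
  rcases eq_or_ne φ 0 with rfl | hφ
  · rw [ContinuousAt, show gProf 0 = 0 by simp [gProf]]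
    exact squeeze_zero_norm abs_gProf_le (continuous_abs.tendsto' 0 0 abs_zero)
  · exact (hasDerivAt_gProf hφ).continuousAt

theorem continuous_rhoProf : Continuous rhoProf := continuous_sinc

theorem rhoProf_zero : rhoProf 0 = 1 := sinc_zero

theorem strictAntiOn_rhoProf : StrictAntiOn rhoProf (Icc 0 π) := by
  refine strictAntiOn_of_deriv_neg (convex_Icc 0 π) continuous_rhoProf.continuousOn fun φ hφ => ?_
  rw [interior_Icc] at hφ
  rw [(hasDerivAt_rhoProf hφ.1.ne').deriv]
  exact div_neg_of_neg_of_pos (neg_neg_of_pos (sin_sub_mul_cos_pos hφ.1 hφ.2.le))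
    (pow_pos hφ.1 2)

theorem rhoProf_pi : rhoProf π = 0 := by simp [rhoProf, pi_ne_zero]

theorem rhoProf_pi_div_two : rhoProf (π / 2) = 2 / π := by
  rw [rhoProf, if_neg (by positivity), sin_pi_div_two, one_div_div]

theorem image_rhoProf_Icc : rhoProf '' Icc 0 π = Icc 0 1 := by
  rw [continuous_rhoProf.continuousOn.image_Icc_of_antitoneOn pi_pos.le
    strictAntiOn_rhoProf.antitoneOn, rhoProf_pi, rhoProf_zero]

theorem rhoProf_rhoInv {r : ℝ} (hr : r ∈ Icc 0 1) : rhoProf (rhoInv r) = r :=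
  (image_rhoProf_Icc ▸ surjOn_image rhoProf (Icc 0 π)).rightInvOn_invFunOn hr

theorem rhoInv_rhoProf {φ : ℝ} (hφ : φ ∈ Icc 0 π) : rhoInv (rhoProf φ) = φ :=
  strictAntiOn_rhoProf.injOn.leftInvOn_invFunOn hφ

theorem mapsTo_rhoInv : MapsTo rhoInv (Icc 0 1) (Icc 0 π) :=
  (image_rhoProf_Icc ▸ surjOn_image rhoProf (Icc 0 π)).mapsTo_invFunOn

theorem rhoInv_zero : rhoInv 0 = π := by
  rw [← rhoProf_pi, rhoInv_rhoProf (right_mem_Icc.2 pi_pos.le)]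

theorem rhoInv_one : rhoInv 1 = 0 := by
  rw [← rhoProf_zero, rhoInv_rhoProf (left_mem_Icc.2 pi_pos.le)]

theorem rhoInv_two_div_pi : rhoInv (2 / π) = π / 2 := by
  rw [← rhoProf_pi_div_two, rhoInv_rhoProf ⟨by positivity, by linarith [pi_pos]⟩]

theorem strictAntiOn_rhoInv : StrictAntiOn rhoInv (Icc 0 1) := by
  intro r hr s hs hrs
  by_contra! hle
  have := strictAntiOn_rhoProf.antitoneOn (mapsTo_rhoInv hr) (mapsTo_rhoInv hs) hle
  rw [rhoProf_rhoInv hr, rhoProf_rhoInv hs] at this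
  exact hrs.not_ge this

theorem continuousOn_rhoInv : ContinuousOn rhoInv (Icc 0 1) :=
  image_rhoProf_Icc ▸ strictAntiOn_rhoProf.injOn.continuousOn_invFunOn isCompact_Icc
    continuous_rhoProf.continuousOn

theorem hasDerivWithinAt_hProf {r : ℝ} (hr : r ∈ Ico 0 1) :
    HasDerivWithinAt hProf (-2 * cos (rhoInv r) / rhoInv r) (Icc 0 1) r := by
  have hr' : r ∈ Icc 0 1 := Ico_subset_Icc_self hr
  set φ := rhoInv r
  have hφ : 0 < φ := by
    refine (mapsTo_rhoInv hr').1.lt_of_ne' fun h => hr.2.ne ?_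
    rw [← rhoProf_rhoInv hr', show rhoInv r = 0 from h, rhoProf_zero]
  have hu : sin φ - φ * cos φ ≠ 0 := (sin_sub_mul_cos_pos hφ (mapsTo_rhoInv hr').2).ne'
  have hrhoInv := HasDerivWithinAt.of_local_left_inverse (t := univ)
    (by simpa using (continuousOn_rhoInv r hr').tendsto)
    (hasDerivAt_rhoProf hφ.ne').hasDerivWithinAt
    (div_ne_zero (neg_ne_zero.2 hu) (by positivity)) hr'
    (eventually_nhdsWithin_of_forall fun _ => rhoProf_rhoInv)
  refine ((hasDerivAt_gProf hφ.ne').comp_hasDerivWithinAt r hrhoInv).congr_deriv ?_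
  -- keep the common factor of `g'` and `ρ'` atomic, so that it cancels
  generalize sin φ - φ * cos φ = u at hu ⊢
  field_simp

theorem two_div_pi_mem_Ioo : 2 / π ∈ Ioo (0 : ℝ) 1 :=
  ⟨by positivity, by rw [div_lt_one pi_pos]; linarith [pi_gt_three]⟩

theorem hProf_zero : hProf 0 = 1 / π := by
  rw [hProf, rhoInv_zero, gProf, if_neg pi_ne_zero, sin_two_pi]
  field_simp
  ring

theorem hProf_two_div_pi : hProf (2 / π) = 2 / π := by
  rw [hProf, rhoInv_two_div_pi, gProf, if_neg (by positivity), mul_div_cancel₀ _ two_ne_zero,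
    sin_pi]
  field_simp
  ring

theorem hProf_one : hProf 1 = 0 := by simp [hProf, rhoInv_one, gProf]

theorem continuousOn_hProf : ContinuousOn hProf (Icc 0 1) :=
  continuous_gProf.comp_continuousOn continuousOn_rhoInv

theorem hasDerivAt_hProf {r : ℝ} (hr : r ∈ Ioo 0 1) :
    HasDerivAt hProf (-2 * cos (rhoInv r) / rhoInv r) r :=
  (hasDerivWithinAt_hProf (Ioo_subset_Ico_self hr)).hasDerivAt (Icc_mem_nhds hr.1 hr.2)

theorem strictMonoOn_hProf : StrictMonoOn hProf (Icc 0 (2 / π)) := by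
  refine strictMonoOn_of_deriv_pos (convex_Icc _ _)
    (continuousOn_hProf.mono (Icc_subset_Icc_right two_div_pi_mem_Ioo.2.le)) fun r hr => ?_
  rw [interior_Icc] at hr
  have hr1 : r < 1 := hr.2.trans two_div_pi_mem_Ioo.2
  have hr' : r ∈ Icc 0 1 := ⟨hr.1.le, hr1.le⟩
  have hφπ : rhoInv r < π := rhoInv_zero ▸
    strictAntiOn_rhoInv (left_mem_Icc.2 zero_le_one) hr' hr.1
  have hφ : π / 2 < rhoInv r := rhoInv_two_div_pi ▸
    strictAntiOn_rhoInv hr' (Ioo_subset_Icc_self two_div_pi_mem_Ioo) hr.2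
  rw [(hasDerivAt_hProf ⟨hr.1, hr1⟩).deriv]
  have := cos_neg_of_pi_div_two_lt_of_lt hφ (by linarith)
  exact div_pos (by linarith) (by linarith [pi_pos])

theorem strictAntiOn_hProf : StrictAntiOn hProf (Icc (2 / π) 1) := by
  refine strictAntiOn_of_deriv_neg (convex_Icc _ _)
    (continuousOn_hProf.mono (Icc_subset_Icc_left two_div_pi_mem_Ioo.1.le)) fun r hr => ?_
  rw [interior_Icc] at hr
  have hr0 : 0 < r := two_div_pi_mem_Ioo.1.trans hr.1
  have hr' : r ∈ Icc 0 1 := ⟨hr0.le, hr.2.le⟩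
  have hφ0 : 0 < rhoInv r := rhoInv_one ▸
    strictAntiOn_rhoInv hr' (right_mem_Icc.2 zero_le_one) hr.2
  have hφ : rhoInv r < π / 2 := rhoInv_two_div_pi ▸
    strictAntiOn_rhoInv (Ioo_subset_Icc_self two_div_pi_mem_Ioo) hr' hr.1
  rw [(hasDerivAt_hProf ⟨hr0, hr.2⟩).deriv]
  have := cos_pos_of_mem_Ioo ⟨by linarith, hφ⟩
  exact div_neg_of_neg_of_pos (by linarith) hφ0

/-- For all `r ∈ [0,1)`, `h'(r) = -2 cos φ / φ` where `φ = ρ⁻¹(r)`; consequently `h` is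
increasing on `[0,2/π]` from `1/π` onto `2/π` and decreasing on `[2/π,1]` from `2/π`
onto `0`. -/
theorem stmt6 :
    (∀ r ∈ Set.Ico (0 : ℝ) 1,
      derivWithin hProf (Set.Icc 0 1) r = -2 * Real.cos (rhoInv r) / rhoInv r) ∧
    StrictMonoOn hProf (Set.Icc 0 (2 / π)) ∧
    hProf '' Set.Icc 0 (2 / π) = Set.Icc (1 / π) (2 / π) ∧
    StrictAntiOn hProf (Set.Icc (2 / π) 1) ∧
    hProf '' Set.Icc (2 / π) 1 = Set.Icc 0 (2 / π) := by
  have h0 : (0 : ℝ) ≤ 2 / π := two_div_pi_mem_Ioo.1.le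
  have h1 : 2 / π ≤ (1 : ℝ) := two_div_pi_mem_Ioo.2.le
  refine ⟨fun r hr => (hasDerivWithinAt_hProf hr).derivWithin
    (uniqueDiffOn_Icc one_pos r (Ico_subset_Icc_self hr)), strictMonoOn_hProf, ?_,
    strictAntiOn_hProf, ?_⟩
  · rw [(continuousOn_hProf.mono (Icc_subset_Icc_right h1)).image_Icc_of_monotoneOn h0
      strictMonoOn_hProf.monotoneOn, hProf_zero, hProf_two_div_pi]
  · rw [(continuousOn_hProf.mono (Icc_subset_Icc_left h0)).image_Icc_of_antitoneOn h1
      strictAntiOn_hProf.antitoneOn, hProf_one, hProf_two_div_pi]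
end
end

section
/- Let B be any (open or closed) ball in the Heisenberg group H^n with the Carnot-Carathéodory distance. If p, q ∈ B satisfy z_p = z_q (they have the same C^n-component), then the vertical segment L_{p,q} = {[z_p, t] : min(t_p,t_q) ≤ t ≤ max(t_p,t_q)} is contained in B. -/
open scoped Real ENNReal
open MeasureTheory

noncomputable section

/-- The Heisenberg group `ℍⁿ`, identified with `ℂⁿ × ℝ` (with the Euclidean `ℓ²` norm on
the `ℂⁿ` factor). -/
abbrev Heis (n : ℕ) : Type := EuclideanSpace ℂ (Fin n) × ℝ

/-- Borel σ-algebra on `ℂⁿ`. -/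
instance (n : ℕ) : MeasurableSpace (EuclideanSpace ℂ (Fin n)) := borel _

instance (n : ℕ) : BorelSpace (EuclideanSpace ℂ (Fin n)) := ⟨rfl⟩

/-- Lebesgue measure on `ℂⁿ`. -/
instance (n : ℕ) : MeasureSpace (EuclideanSpace ℂ (Fin n)) :=
  ⟨Measure.map ((WithLp.equiv 2 (Fin n → ℂ)).symm) volume⟩

namespace Heis

/-- The Hermitian product `z ⬝ conj w = ∑ zⱼ conj(wⱼ)`. -/
def herm {n : ℕ} (z w : EuclideanSpace ℂ (Fin n)) : ℂ :=
  ∑ j, z j * (starRingEnd ℂ) (w j)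

/-- The Heisenberg group law `[z,t]·[z',t'] = [z+z', t+t'+2 Im (z ⬝ conj z')]`. -/
def mul {n : ℕ} (p q : Heis n) : Heis n :=
  (p.1 + q.1, p.2 + q.2 + 2 * (herm p.1 q.1).im)

/-- Dilations `δ_λ [z,t] = [λ z, λ² t]`. -/
def dilation {n : ℕ} (l : ℝ) (p : Heis n) : Heis n := (l • p.1, l ^ 2 * p.2)

/-- A `C¹` horizontal curve in the Heisenberg group: at every point the tangent vector lies
in the horizontal subbundle spanned by the left-invariant fields
`X_j = ∂_{x_j} + 2 y_j ∂_t`, `Y_j = ∂_{y_j} - 2 x_j ∂_t`, which amounts to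
`t'(s) = 2 Im (z(s) ⬝ conj z'(s))`. -/
structure HorizCurve (n : ℕ) where
  z : ℝ → EuclideanSpace ℂ (Fin n)
  t : ℝ → ℝ
  z' : ℝ → EuclideanSpace ℂ (Fin n)
  hz : ∀ s : ℝ, HasDerivAt z (z' s) s
  ht : ∀ s : ℝ, HasDerivAt t (2 * (herm (z s) (z' s)).im) s
  hz' : Continuous z'

/-- The sub-Riemannian length of a horizontal curve (the metric `g` makes the horizontal
frame orthonormal, so the length is the integral of the Euclidean norm of `z'`). -/
def HorizCurve.length {n : ℕ} (γ : HorizCurve n) : ℝ :=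
  ∫ s in (0:ℝ)..1, ‖γ.z' s‖

/-- The Carnot–Carathéodory distance: the infimum of lengths of horizontal curves
joining `p` to `q`. -/
def ccDist {n : ℕ} (p q : Heis n) : ℝ :=
  sInf { L : ℝ | ∃ γ : HorizCurve n, γ.z 0 = p.1 ∧ γ.t 0 = p.2 ∧
      γ.z 1 = q.1 ∧ γ.t 1 = q.2 ∧ L = γ.length }

/-- Open CC-ball. -/
def ccBall {n : ℕ} (p : Heis n) (r : ℝ) : Set (Heis n) := { q | ccDist p q < r }

/-- Closed CC-ball. -/
def ccClosedBall {n : ℕ} (p : Heis n) (r : ℝ) : Set (Heis n) := { q | ccDist p q ≤ r }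

/-- CC-diameter of a set. -/
def ccDiam {n : ℕ} (F : Set (Heis n)) : ℝ :=
  sSup { r : ℝ | ∃ p ∈ F, ∃ q ∈ F, r = ccDist p q }

/-- A set is CC-bounded if the pairwise CC-distances of its points are bounded. -/
def ccBounded {n : ℕ} (F : Set (Heis n)) : Prop :=
  ∃ M : ℝ, ∀ p ∈ F, ∀ q ∈ F, ccDist p q ≤ M

/-- The vertical segment joining two points with the same `ℂⁿ`-component. -/
def vseg {n : ℕ} (p q : Heis n) : Set (Heis n) :=
  { x | x.1 = p.1 ∧ x.2 ∈ Set.uIcc p.2 q.2 }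

/-- The `t`-convex hull of a set. -/
def tco {n : ℕ} (F : Set (Heis n)) : Set (Heis n) :=
  { x | ∃ p₁ ∈ F, ∃ p₂ ∈ F, p₁.1 = p₂.1 ∧ x ∈ vseg p₁ p₂ }

/-- A set is `t`-convex if it contains the vertical segment joining any two of its points
having the same `ℂⁿ`-component. -/
def TConvex {n : ℕ} (E : Set (Heis n)) : Prop :=
  ∀ p ∈ E, ∀ q ∈ E, p.1 = q.1 → vseg p q ⊆ E

/-- The rotation `r_θ [z,t] = [(e^{iθ₁} z₁, …, e^{iθₙ} zₙ), t]`. -/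
def rot {n : ℕ} (θ : Fin n → ℝ) (p : Heis n) : Heis n :=
  ((WithLp.equiv 2 (Fin n → ℂ)).symm fun j => Complex.exp ((θ j : ℂ) * Complex.I) * p.1 j,
    p.2)

/-- Rotationally invariant sets: the class `𝓡`. -/
def RotInvariant {n : ℕ} (F : Set (Heis n)) : Prop :=
  ∀ θ : Fin n → ℝ, rot θ '' F ⊆ F

/-- The reflection `σ [z,t] = [conj z, t]`. -/
def sigmaRefl {n : ℕ} (p : Heis n) : Heis n :=
  ((WithLp.equiv 2 (Fin n → ℂ)).symm fun j => (starRingEnd ℂ) (p.1 j), p.2)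

/-- The Steiner symmetrization of a set with respect to the `ℂⁿ`-plane. -/
def steiner {n : ℕ} (F : Set (Heis n)) : Set (Heis n) :=
  { x | x.1 ∈ Prod.fst '' F ∧
      2 * |x.2| ≤ (volume { s : ℝ | ((x.1, s) : Heis n) ∈ F }).toReal }

/-- The isodiametric constant `C_I`. -/
def CI (n : ℕ) : ℝ :=
  sSup { x : ℝ | ∃ F : Set (Heis n), ccBounded F ∧ 0 < ccDiam F ∧
    x = (volume F).toReal / (ccDiam F) ^ (2 * n + 2) }

/-- The isodiametric constant `C_{I,𝓡}` for the restricted problem in the class `𝓡`. -/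
def CIR (n : ℕ) : ℝ :=
  sSup { x : ℝ | ∃ F : Set (Heis n), RotInvariant F ∧ ccBounded F ∧ 0 < ccDiam F ∧
    x = (volume F).toReal / (ccDiam F) ^ (2 * n + 2) }

end Heis

/-!
Let `γ₁, γ₂` be horizontal curves from the centre `c` to `p` and to `q`. Since `z_p = z_q`, every
convex combination `(1 - l) z₁ + l z₂` of their `ℂⁿ`-parts also ends at `z_p`, and the end height of
its horizontal lift from `c` depends continuously on `l`, equal to `t_p` at `l = 0` and to `t_q`
at `l = 1`. By the intermediate value theorem some lift ends at any given point `x` of the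
vertical segment, and by convexity of the norm its length is at most
`(1 - l) L(γ₁) + l L(γ₂)`. Hence `d(c, x) ≤ max (d(c, p)) (d(c, q))`.

The distance is an infimum, which is `0` for an empty set of curves, so this argument needs
every two points to be joined by a horizontal curve. For `n > 0` such a curve is the segment
from `z_p` to `z_q` with a small loop attached; the signed area enclosed by the loop moves the
end height by an arbitrary amount. For `n = 0` all curves have length `0`.
-/

theorem Polynomial.hasDerivAt_eval_ofReal (P : Polynomial ℂ) (s : ℝ) :
    HasDerivAt (fun s : ℝ => P.eval (s : ℂ)) (P.derivative.eval (s : ℂ)) s :=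
  (P.hasDerivAt _).comp_ofReal

namespace Heis

open Complex ComplexConjugate Polynomial

variable {n : ℕ}

theorem herm_eq_inner (z w : EuclideanSpace ℂ (Fin n)) : herm z w = inner ℂ w z := by
  simp [herm, PiLp.inner_apply]

@[fun_prop]
theorem continuous_herm {X : Type*} [TopologicalSpace X] {f g : X → EuclideanSpace ℂ (Fin n)}
    (hf : Continuous f) (hg : Continuous g) : Continuous fun s => herm (f s) (g s) := by
  simp only [herm_eq_inner]
  exact hg.inner hf

namespace HorizCurve

def Joins (γ : HorizCurve n) (p q : Heis n) : Prop :=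
  γ.z 0 = p.1 ∧ γ.t 0 = p.2 ∧ γ.z 1 = q.1 ∧ γ.t 1 = q.2

@[fun_prop]
theorem continuous_z (γ : HorizCurve n) : Continuous γ.z :=
  continuous_iff_continuousAt.2 fun s => (γ.hz s).continuousAt

@[fun_prop]
theorem continuous_z' (γ : HorizCurve n) : Continuous γ.z' :=
  γ.hz'

theorem t_one_sub_t_zero (γ : HorizCurve n) :
    γ.t 1 - γ.t 0 = ∫ s in (0 : ℝ)..1, 2 * (herm (γ.z s) (γ.z' s)).im :=
  (intervalIntegral.integral_eq_sub_of_hasDerivAt (fun s _ => γ.ht s)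
    (Continuous.intervalIntegrable (by fun_prop) 0 1)).symm

def lift (z z' : ℝ → EuclideanSpace ℂ (Fin n)) (hz : ∀ s, HasDerivAt z (z' s) s)
    (hz' : Continuous z') (t₀ : ℝ) : HorizCurve n where
  z := z
  t s := t₀ + ∫ u in (0 : ℝ)..s, 2 * (herm (z u) (z' u)).im
  z' := z'
  hz := hz
  ht s := by
    have : Continuous z := continuous_iff_continuousAt.2 fun s => (hz s).continuousAt
    exact ((Continuous.integral_hasStrictDerivAt (by fun_prop) 0 s).hasDerivAt).const_add t₀
  hz' := hz'

@[simp]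
theorem lift_t_zero (z z' : ℝ → EuclideanSpace ℂ (Fin n)) (hz : ∀ s, HasDerivAt z (z' s) s)
    (hz' : Continuous z') (t₀ : ℝ) : (lift z z' hz hz' t₀).t 0 = t₀ := by
  simp [lift]

def interpolate (γ₁ γ₂ : HorizCurve n) (t₀ l : ℝ) : HorizCurve n :=
  lift (fun s => (1 - l) • γ₁.z s + l • γ₂.z s) (fun s => (1 - l) • γ₁.z' s + l • γ₂.z' s)
    (fun s => ((γ₁.hz s).const_smul (1 - l)).add ((γ₂.hz s).const_smul l))
    (by fun_prop) t₀

section Interpolate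

variable (γ₁ γ₂ : HorizCurve n) (t₀ : ℝ)

theorem interpolate_z (l s : ℝ) : (interpolate γ₁ γ₂ t₀ l).z s = (1 - l) • γ₁.z s + l • γ₂.z s :=
  rfl

@[simp]
theorem interpolate_t_zero (l : ℝ) : (interpolate γ₁ γ₂ t₀ l).t 0 = t₀ :=
  lift_t_zero ..

theorem interpolate_zero_t_one : (interpolate γ₁ γ₂ t₀ 0).t 1 = t₀ + (γ₁.t 1 - γ₁.t 0) := by
  simp [interpolate, lift, t_one_sub_t_zero]

theorem interpolate_one_t_one : (interpolate γ₁ γ₂ t₀ 1).t 1 = t₀ + (γ₂.t 1 - γ₂.t 0) := by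
  simp [interpolate, lift, t_one_sub_t_zero]

theorem continuous_interpolate_t_one : Continuous fun l => (interpolate γ₁ γ₂ t₀ l).t 1 := by
  simp only [interpolate, lift]
  exact continuous_const.add
    (intervalIntegral.continuous_parametric_intervalIntegral_of_continuous' (by fun_prop) 0 1)

theorem length_interpolate_le {l : ℝ} (hl : l ∈ Set.Icc (0 : ℝ) 1) :
    (interpolate γ₁ γ₂ t₀ l).length ≤ (1 - l) * γ₁.length + l * γ₂.length := by
  obtain ⟨hl₀, hl₁⟩ := hl
  calc (interpolate γ₁ γ₂ t₀ l).length
      = ∫ s in (0 : ℝ)..1, ‖(1 - l) • γ₁.z' s + l • γ₂.z' s‖ := rfl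
    _ ≤ ∫ s in (0 : ℝ)..1, ((1 - l) * ‖γ₁.z' s‖ + l * ‖γ₂.z' s‖) := by
      refine intervalIntegral.integral_mono_on zero_le_one
        (Continuous.intervalIntegrable (by fun_prop) _ _)
        (Continuous.intervalIntegrable (by fun_prop) _ _) fun s _ => ?_
      refine (norm_add_le _ _).trans_eq ?_
      rw [norm_smul, norm_smul, Real.norm_of_nonneg (sub_nonneg.2 hl₁), Real.norm_of_nonneg hl₀]
    _ = (1 - l) * γ₁.length + l * γ₂.length := by
      rw [intervalIntegral.integral_add (Continuous.intervalIntegrable (by fun_prop) _ _)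
        (Continuous.intervalIntegrable (by fun_prop) _ _), intervalIntegral.integral_const_mul,
        intervalIntegral.integral_const_mul]
      rfl

end Interpolate

theorem exists_interpolate_joins {c p q x : Heis n} {γ₁ γ₂ : HorizCurve n} (h₁ : γ₁.Joins c p)
    (h₂ : γ₂.Joins c q) (hx : x ∈ vseg p q) (hpq : p.1 = q.1) :
    ∃ l ∈ Set.Icc (0 : ℝ) 1, (interpolate γ₁ γ₂ c.2 l).Joins c x := by
  obtain ⟨hz₁0, ht₁0, hz₁1, ht₁1⟩ := h₁
  obtain ⟨hz₂0, ht₂0, hz₂1, ht₂1⟩ := h₂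
  obtain ⟨hx₁, hx₂⟩ := hx
  have hmem : x.2 ∈ Set.uIcc ((interpolate γ₁ γ₂ c.2 0).t 1) ((interpolate γ₁ γ₂ c.2 1).t 1) := by
    rwa [interpolate_zero_t_one, interpolate_one_t_one, ht₁0, ht₁1, ht₂0, ht₂1,
      add_sub_cancel, add_sub_cancel]
  obtain ⟨l, hl, hlx⟩ := intermediate_value_uIcc
    (continuous_interpolate_t_one γ₁ γ₂ c.2).continuousOn hmem
  rw [Set.uIcc_of_le zero_le_one] at hl
  refine ⟨l, hl, ?_, interpolate_t_zero .., ?_, hlx⟩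
  · rw [interpolate_z, hz₁0, hz₂0, ← add_smul, sub_add_cancel, one_smul]
  · rw [interpolate_z, hz₁1, hz₂1, hx₁, hpq, ← add_smul, sub_add_cancel, one_smul]

/-- `loop μ` vanishes at `0` and `1`, `loopPrimitive μ 1 = 1 / 6` does not depend on `μ`, and
`loopArea μ 1 = μ / 15 * I`: this is where the term `2 * μ * ‖u‖ ^ 2 / 15` in `loopCurve_joins`
comes from. -/
def loop (μ s : ℝ) : ℂ := (s - s ^ 2 : ℂ) + μ * (s - 3 * s ^ 2 + 2 * s ^ 3 : ℂ) * I

def loopDeriv (μ s : ℝ) : ℂ := (1 - 2 * s : ℂ) + μ * (1 - 6 * s + 6 * s ^ 2 : ℂ) * I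

def loopPrimitive (μ s : ℝ) : ℂ :=
  (s ^ 2 / 2 - s ^ 3 / 3 : ℂ) + μ * (s ^ 2 / 2 - s ^ 3 + s ^ 4 / 2 : ℂ) * I

def loopArea (μ s : ℝ) : ℂ :=
  ((s - s ^ 2 : ℂ) ^ 2 + μ ^ 2 * (s - 3 * s ^ 2 + 2 * s ^ 3 : ℂ) ^ 2) / 2
    + μ * (2 * s ^ 3 / 3 - s ^ 4 + 2 * s ^ 5 / 5 : ℂ) * I

theorem hasDerivAt_loop (μ s : ℝ) : HasDerivAt (loop μ) (loopDeriv μ s) s := by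
  convert hasDerivAt_eval_ofReal (X - X ^ 2 + C (μ * I) * (X - 3 * X ^ 2 + 2 * X ^ 3)) s using 1
  · ext s; simp [loop]; ring
  · simp [loopDeriv]; ring

theorem hasDerivAt_loopPrimitive (μ s : ℝ) : HasDerivAt (loopPrimitive μ) (loop μ s) s := by
  convert hasDerivAt_eval_ofReal (C (1 / 2) * X ^ 2 - C (1 / 3) * X ^ 3
    + C (μ * I) * (C (1 / 2) * X ^ 2 - X ^ 3 + C (1 / 2) * X ^ 4)) s using 1
  · ext s; simp [loopPrimitive]; ring
  · simp [loop]; ring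

theorem hasDerivAt_loopArea (μ s : ℝ) :
    HasDerivAt (loopArea μ) (conj (loopDeriv μ s) * loop μ s) s := by
  convert hasDerivAt_eval_ofReal (C (1 / 2) * (X - X ^ 2) ^ 2
    + C ((μ : ℂ) ^ 2 / 2) * (X - 3 * X ^ 2 + 2 * X ^ 3) ^ 2
    + C (μ * I) * (C (2 / 3) * X ^ 3 - X ^ 4 + C (2 / 5) * X ^ 5)) s using 1
  · ext s; simp [loopArea]; ring
  · simp only [loopDeriv, loop, map_add, map_sub, map_mul, map_ofNat, map_one, map_pow,
      conj_ofReal, conj_I]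
    simp [derivative_pow]
    linear_combination (-(μ : ℂ) ^ 2 * (s - 3 * s ^ 2 + 2 * s ^ 3) * (1 - 6 * s + 6 * s ^ 2)) * I_sq

section LoopCurve

variable (a w u : EuclideanSpace ℂ (Fin n)) (μ : ℝ)

/-- A primitive of `herm (z s) (z' s)` along `s ↦ a + s w + loop μ s • u`. -/
def loopCurvePotential (s : ℝ) : ℂ :=
  s * inner ℂ w a + s ^ 2 / 2 * inner ℂ w w + loopPrimitive μ s * inner ℂ w u
    + conj (loop μ s) * inner ℂ u a + (s * conj (loop μ s) - conj (loopPrimitive μ s)) * inner ℂ u w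
    + loopArea μ s * inner ℂ u u

theorem hasDerivAt_loopCurvePotential (s : ℝ) :
    HasDerivAt (loopCurvePotential a w u μ)
      (herm (a + (s : ℂ) • w + loop μ s • u) (w + loopDeriv μ s • u)) s := by
  have hs : HasDerivAt (fun s : ℝ => (s : ℂ)) 1 s := (hasDerivAt_id s).ofReal_comp
  have hφ := (hasDerivAt_loop μ s).star
  have hΦ := (hasDerivAt_loopPrimitive μ s).star
  refine ((((((hs.mul_const (inner ℂ w a)).add
    (((hs.pow 2).div_const 2).mul_const (inner ℂ w w))).add
    ((hasDerivAt_loopPrimitive μ s).mul_const (inner ℂ w u))).add (hφ.mul_const (inner ℂ u a))).add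
    (((hs.mul hφ).sub hΦ).mul_const (inner ℂ u w))).add
    ((hasDerivAt_loopArea μ s).mul_const (inner ℂ u u))).congr_deriv ?_
  simp only [herm_eq_inner, inner_add_left, inner_add_right, inner_smul_left, inner_smul_right,
    Complex.star_def]
  push_cast
  ring

end LoopCurve

def loopCurve (a : Heis n) (w u : EuclideanSpace ℂ (Fin n)) (μ : ℝ) : HorizCurve n where
  z s := a.1 + (s : ℂ) • w + loop μ s • u
  t s := a.2 + 2 * (loopCurvePotential a.1 w u μ s).im
  z' s := w + loopDeriv μ s • u
  hz s := by
    have hs : HasDerivAt (fun s : ℝ => (s : ℂ)) 1 s := (hasDerivAt_id s).ofReal_comp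
    exact (((hs.smul_const w).const_add a.1).add ((hasDerivAt_loop μ s).smul_const u)).congr_deriv
      (by rw [one_smul])
  ht s := ((imCLM.hasFDerivAt.comp_hasDerivAt s
    (hasDerivAt_loopCurvePotential a.1 w u μ s)).const_mul 2).const_add a.2
  hz' := by unfold loopDeriv; fun_prop

theorem loopCurve_joins (a : Heis n) (w u : EuclideanSpace ℂ (Fin n)) (μ : ℝ) :
    (loopCurve a w u μ).Joins a (a.1 + w,
      a.2 + 2 * (inner ℂ w a.1 + (inner ℂ w u - inner ℂ u w) / 6).im + 2 * μ * ‖u‖ ^ 2 / 15) := by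
  refine ⟨?_, ?_, ?_, ?_⟩ <;>
    norm_num [loopCurve, loopCurvePotential, loop, loopPrimitive, loopArea,
      inner_self_eq_norm_sq_to_K, ← ofReal_pow]
  ring

end HorizCurve

theorem ccDist_le_length {p q : Heis n} {γ : HorizCurve n} (h : γ.Joins p q) :
    ccDist p q ≤ γ.length := by
  refine csInf_le ⟨0, ?_⟩ ⟨γ, h.1, h.2.1, h.2.2.1, h.2.2.2, rfl⟩
  rintro _ ⟨γ', -, -, -, -, rfl⟩
  exact intervalIntegral.integral_nonneg zero_le_one fun _ _ => norm_nonneg _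

theorem exists_joins_length_lt {p q : Heis n} (hpq : ∃ γ : HorizCurve n, γ.Joins p q) {M : ℝ}
    (h : ccDist p q < M) : ∃ γ : HorizCurve n, γ.Joins p q ∧ γ.length < M := by
  obtain ⟨γ, hγ⟩ := hpq
  obtain ⟨_, ⟨γ', h0z, h0t, h1z, h1t, rfl⟩, hlt⟩ :=
    exists_lt_of_csInf_lt (by exact ⟨_, γ, hγ.1, hγ.2.1, hγ.2.2.1, hγ.2.2.2, rfl⟩) h
  exact ⟨γ', ⟨h0z, h0t, h1z, h1t⟩, hlt⟩

theorem ccDist_eq_zero_of_dim_zero (p q : Heis 0) : ccDist p q = 0 := by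
  have hlen (γ : HorizCurve 0) : γ.length = 0 := by
    simp [HorizCurve.length, Subsingleton.elim _ (0 : EuclideanSpace ℂ (Fin 0))]
  refine le_antisymm (Real.sInf_nonpos ?_) (Real.sInf_nonneg ?_) <;>
    rintro _ ⟨γ, -, -, -, -, rfl⟩ <;> simp [hlen]

theorem exists_horizCurve_joins (hn : 0 < n) (p q : Heis n) :
    ∃ γ : HorizCurve n, γ.Joins p q := by
  set u := EuclideanSpace.single (⟨0, hn⟩ : Fin n) (1 : ℂ)
  have hu : ‖u‖ = 1 := by simp [u]
  set c := 2 * (inner ℂ (q.1 - p.1) p.1 + (inner ℂ (q.1 - p.1) u - inner ℂ u (q.1 - p.1)) / 6).im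
  refine ⟨HorizCurve.loopCurve p (q.1 - p.1) u (15 / 2 * (q.2 - p.2 - c)), ?_⟩
  convert HorizCurve.loopCurve_joins p (q.1 - p.1) u _ using 2
  ext
  · simp
  · rw [hu]; ring

theorem ccDist_le_max_of_mem_vseg (c : Heis n) {p q x : Heis n} (hpq : p.1 = q.1)
    (hx : x ∈ vseg p q) : ccDist c x ≤ max (ccDist c p) (ccDist c q) := by
  rcases Nat.eq_zero_or_pos n with rfl | hn
  · simp [ccDist_eq_zero_of_dim_zero]
  refine le_of_forall_pos_lt_add fun ε hε => ?_
  obtain ⟨γ₁, h₁, hlt₁⟩ := exists_joins_length_lt (exists_horizCurve_joins hn c p)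
    (lt_add_of_le_of_pos (le_max_left (ccDist c p) (ccDist c q)) hε)
  obtain ⟨γ₂, h₂, hlt₂⟩ := exists_joins_length_lt (exists_horizCurve_joins hn c q)
    (lt_add_of_le_of_pos (le_max_right (ccDist c p) (ccDist c q)) hε)
  obtain ⟨l, hl, hx⟩ := HorizCurve.exists_interpolate_joins h₁ h₂ hx hpq
  calc ccDist c x ≤ (HorizCurve.interpolate γ₁ γ₂ c.2 l).length := ccDist_le_length hx
    _ ≤ (1 - l) * γ₁.length + l * γ₂.length := HorizCurve.length_interpolate_le _ _ _ hl
    _ ≤ max γ₁.length γ₂.length :=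
      Convex.combo_le_max _ _ (sub_nonneg.2 hl.2) hl.1 (sub_add_cancel 1 l)
    _ < max (ccDist c p) (ccDist c q) + ε := max_lt hlt₁ hlt₂

end Heis

/-- Any (open or closed) CC-ball contains the vertical segment joining any two of its
points with the same `ℂⁿ`-component. -/
theorem stmt8 (n : ℕ) (c : Heis n) (r : ℝ) (B : Set (Heis n))
    (hB : B = Heis.ccBall c r ∨ B = Heis.ccClosedBall c r)
    (p q : Heis n) (hp : p ∈ B) (hq : q ∈ B) (hz : p.1 = q.1) :
    Heis.vseg p q ⊆ B := by
  intro x hx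
  have hle := Heis.ccDist_le_max_of_mem_vseg c hz hx
  rcases hB with rfl | rfl
  · exact hle.trans_lt (max_lt hp hq)
  · exact hle.trans (max_le hp hq)
end
end
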